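/- arXiv:1612.08244 — 2 statements merged into one kernel-verified Lean document; each statement's English description precedes it below -/
import Mathlib

section
/- Let L be a Leibniz algebra over a field 𝕜 with left center Z. The multiplication on C(L) is associative: for ω ∈ C^n(L), η ∈ C^m(L), λ ∈ C^l(L), both ((ω·η)·λ)_k(e₁,…,e_{n+m+l−2k}; f₁,…,f_k) and (ω·(η·λ))_k(e₁,…,e_{n+m+l−2k}; f₁,…,f_k) equal Σ_{a+b+c=k} Σ_{σ∈sh(n−2a,m−2b,l−2c)} Σ_{τ∈sh(a,b,c)} (−1)^σ ω_a(…) η_b(…) λ_c(…), where the arguments are distributed according to the shuffles σ and τ. -/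
open scoped TensorProduct

universe u v w

/-- A (left) Leibniz algebra over a field `𝕜`. -/
structure LeibnizAlg (𝕜 : Type u) [Field 𝕜] (L : Type v) [AddCommGroup L] [Module 𝕜 L] where
  br : L →ₗ[𝕜] L →ₗ[𝕜] L
  leibniz : ∀ a b c : L, br a (br b c) = br (br a b) c + br b (br a c)

namespace LeibnizAlg

variable {𝕜 : Type u} [Field 𝕜] {L : Type v} [AddCommGroup L] [Module 𝕜 L]
variable (A : LeibnizAlg 𝕜 L)

/-- The left center `Z = {z | z ∘ e = 0 for all e}`. -/
def leftCenter : Submodule 𝕜 L where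
  carrier := {z | ∀ e : L, A.br z e = 0}
  add_mem' := by
    intro a b ha hb
    simp only [Set.mem_setOf_eq] at *
    intro e
    rw [map_add, LinearMap.add_apply, ha e, hb e, add_zero]
  zero_mem' := by
    simp only [Set.mem_setOf_eq]
    intro e
    rw [map_zero, LinearMap.zero_apply]
  smul_mem' := by
    intro c x hx
    simp only [Set.mem_setOf_eq] at *
    intro e
    rw [map_smul, LinearMap.smul_apply, hx e, smul_zero]

lemma mem_leftCenter_iff {z : L} : z ∈ A.leftCenter ↔ ∀ e : L, A.br z e = 0 := Iff.rfl

/-- The symmetric product `(a,b) = a∘b + b∘a`. -/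
def sp (a b : L) : L := A.br a b + A.br b a

lemma sp_mem (a b : L) : A.sp a b ∈ A.leftCenter := by
  rw [mem_leftCenter_iff]
  intro e
  have h1 := A.leibniz a b e
  have h2 := A.leibniz b a e
  have hx : A.br (A.br a b) e = A.br a (A.br b e) - A.br b (A.br a e) :=
    eq_sub_iff_add_eq.mpr h1.symm
  have hy : A.br (A.br b a) e = A.br b (A.br a e) - A.br a (A.br b e) :=
    eq_sub_iff_add_eq.mpr h2.symm
  rw [sp, map_add, LinearMap.add_apply, hx, hy]
  abel

/-- The symmetric product, seen as valued in the left center. -/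
def spZ (a b : L) : A.leftCenter := ⟨A.sp a b, A.sp_mem a b⟩

lemma br_mem (e : L) (f : A.leftCenter) : A.br e (f : L) ∈ A.leftCenter := by
  rw [mem_leftCenter_iff]
  intro e'
  have h := A.leibniz e (f : L) e'
  have hf : A.br (f : L) e' = 0 := (A.mem_leftCenter_iff.mp f.2) e'
  have hf2 : A.br (f : L) (A.br e e') = 0 := (A.mem_leftCenter_iff.mp f.2) _
  rw [hf] at h
  rw [map_zero] at h
  rw [hf2, add_zero] at h
  exact h.symm

/-- The bracket of `L` on its left center. -/
def brZ (e : L) (f : A.leftCenter) : A.leftCenter := ⟨A.br e (f : L), A.br_mem e f⟩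

/-- The symmetric product as a bilinear map into the left center. -/
noncomputable def spL : L →ₗ[𝕜] L →ₗ[𝕜] A.leftCenter :=
  LinearMap.mk₂ 𝕜 A.spZ
    (fun a a' b => Subtype.ext (by
      simp only [spZ, sp, map_add, LinearMap.add_apply, Submodule.coe_add]
      abel))
    (fun c a b => Subtype.ext (by
      simp only [spZ, sp, map_smul, LinearMap.smul_apply, SetLike.val_smul, smul_add]))
    (fun a b b' => Subtype.ext (by
      simp only [spZ, sp, map_add, LinearMap.add_apply, Submodule.coe_add]
      abel))
    (fun c a b => Subtype.ext (by
      simp only [spZ, sp, map_smul, LinearMap.smul_apply, SetLike.val_smul, smul_add]))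

end LeibnizAlg

/-- `(S, ι)` is (a model of) the symmetric algebra of the module `Z`:
it satisfies the universal property. -/
def IsSymAlg {𝕜 : Type u} [Field 𝕜] {Z : Type v} [AddCommGroup Z] [Module 𝕜 Z]
    (S : Type w) [CommRing S] [Algebra 𝕜 S] (ι : Z →ₗ[𝕜] S) : Prop :=
  ∀ (B : Type (max u v w)) [CommRing B] [Algebra 𝕜 B] (g : Z →ₗ[𝕜] B),
    ∃! h : S →ₐ[𝕜] B, ∀ z : Z, h (ι z) = g z

section Shuffles

/-- All ways of splitting a list into a signed pair of complementary subsequences. -/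
def shSplits {α : Type*} : List α → List (ℤ × List α × List α)
  | [] => [(1, [], [])]
  | a :: l =>
      ((shSplits l).map fun t => (t.1, a :: t.2.1, t.2.2)) ++
      ((shSplits l).map fun t => ((-1) ^ t.2.1.length * t.1, t.2.1, a :: t.2.2))

/-- Signed sum over all `(p, l.length - p)`-shuffles of the list `l`. -/
def shSum {α : Type*} {S : Type*} [AddCommGroup S] (p : ℕ) (l : List α)
    (F : List α → List α → S) : S :=
  (((shSplits l).filter fun t => t.2.1.length == p).map fun t => t.1 • F t.2.1 t.2.2).sum

/-- Unsigned sum over all `(p, l.length - p)`-shuffles of the list `l`. -/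
def shSumU {α : Type*} {S : Type*} [AddCommMonoid S] (p : ℕ) (l : List α)
    (F : List α → List α → S) : S :=
  (((shSplits l).filter fun t => t.2.1.length == p).map fun t => F t.2.1 t.2.2).sum

end Shuffles

section Cochains

variable {𝕜 : Type u} [Field 𝕜] {L : Type v} [AddCommGroup L] [Module 𝕜 L]
variable (A : LeibnizAlg 𝕜 L)
variable (S : Type w) [CommRing S] [Algebra 𝕜 S]
variable (ι : A.leftCenter →ₗ[𝕜] S)

/-- `ω` is an `n`-cochain in the standard complex `C(L) = C(L, Z, S^•(Z))`:
its component `ω k`, defined on tuples `es` of `n - 2k` elements of `L` and `k`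
elements of the left center, is multilinear, symmetric in the `Z`-arguments, and
weakly skew-symmetric in the `L`-arguments. -/
structure IsCochain (n : ℕ) (ω : ℕ → List L → List A.leftCenter → S) : Prop where
  add_e : ∀ (k : ℕ) (p q : List L) (x y : L) (fs : List A.leftCenter),
    2*k + (p.length + 1 + q.length) = n → fs.length = k →
    ω k (p ++ (x + y) :: q) fs = ω k (p ++ x :: q) fs + ω k (p ++ y :: q) fs
  smul_e : ∀ (k : ℕ) (p q : List L) (c : 𝕜) (x : L) (fs : List A.leftCenter),
    2*k + (p.length + 1 + q.length) = n → fs.length = k →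
    ω k (p ++ (c • x) :: q) fs = c • ω k (p ++ x :: q) fs
  add_f : ∀ (k : ℕ) (es : List L) (p q : List A.leftCenter) (x y : A.leftCenter),
    2*k + es.length = n → p.length + 1 + q.length = k →
    ω k es (p ++ (x + y) :: q) = ω k es (p ++ x :: q) + ω k es (p ++ y :: q)
  smul_f : ∀ (k : ℕ) (es : List L) (p q : List A.leftCenter) (c : 𝕜) (x : A.leftCenter),
    2*k + es.length = n → p.length + 1 + q.length = k →
    ω k es (p ++ (c • x) :: q) = c • ω k es (p ++ x :: q)
  symm_f : ∀ (k : ℕ) (es : List L) (p q : List A.leftCenter) (x y : A.leftCenter),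
    2*k + es.length = n → p.length + 2 + q.length = k →
    ω k es (p ++ x :: y :: q) = ω k es (p ++ y :: x :: q)
  skew : ∀ (k : ℕ) (p q : List L) (x y : L) (fs : List A.leftCenter),
    2*k + (p.length + 2 + q.length) = n → fs.length = k →
    ω k (p ++ x :: y :: q) fs + ω k (p ++ y :: x :: q) fs
      = - ω (k+1) (p ++ q) (A.spZ x y :: fs)

/-- The product of an `n`-cochain and an `m`-cochain. -/
def cmul (n m : ℕ) (ω η : ℕ → List L → List A.leftCenter → S) :
    ℕ → List L → List A.leftCenter → S :=
  fun k es fs => ∑ i ∈ Finset.range (k+1),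
    if 2*i ≤ n ∧ 2*(k-i) ≤ m then
      shSum (n - 2*i) es fun es₁ es₂ =>
        shSumU i fs fun fs₁ fs₂ => ω i es₁ fs₁ * η (k-i) es₂ fs₂
    else 0

/-- The operator `d₀` of the standard complex, where `ρ` is the action of `L` on
`S^•(Z)` by derivations. -/
def cd0 (ρ : L → Derivation 𝕜 S S) (ω : ℕ → List L → List A.leftCenter → S) :
    ℕ → List L → List A.leftCenter → S :=
  fun k es fs =>
    (∑ a ∈ Finset.range es.length,
      (-1 : ℤ)^a • ρ (es.getD a 0) (ω k (es.eraseIdx a) fs))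
    + ∑ a ∈ Finset.range es.length, ∑ b ∈ Finset.Ico (a+1) es.length,
        (-1 : ℤ)^(a+1) •
          ω k ((es.eraseIdx a).set (b-1) (A.br (es.getD a 0) (es.getD b 0))) fs

/-- The operator `δ` of the standard complex. -/
def cdel (ω : ℕ → List L → List A.leftCenter → S) :
    ℕ → List L → List A.leftCenter → S :=
  fun k es fs => ∑ j ∈ Finset.range fs.length,
    ω (k-1) (((fs.getD j 0 : A.leftCenter) : L) :: es) (fs.eraseIdx j)

/-- The symmetric product with values pushed into `S = S^•(Z)`. -/
noncomputable def spS : L →ₗ[𝕜] L →ₗ[𝕜] S := (A.spL).compr₂ ι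

/-- The `S^•(Z)`-bilinear extension of the symmetric product to `S^•(Z) ⊗ L`. -/
noncomputable def pairT : (S ⊗[𝕜] L) →ₗ[𝕜] (S ⊗[𝕜] L) →ₗ[𝕜] S :=
  TensorProduct.curry <|
    (TensorProduct.lift (LinearMap.mul 𝕜 S)).comp <|
      (TensorProduct.map (TensorProduct.lift (LinearMap.mul 𝕜 S))
        (TensorProduct.lift (spS A S ι))).comp
        (TensorProduct.tensorTensorTensorComm 𝕜 S L S L).toLinearMap

/-- `ω` is a representable `n`-cochain: each of the maps
`e ↦ ω k (es ++ [e]) fs` lies in the image of `φ = pairT`. -/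
def IsRepr (n : ℕ) (ω : ℕ → List L → List A.leftCenter → S) : Prop :=
  ∀ (k : ℕ) (es : List L) (fs : List A.leftCenter),
    2*k + (es.length + 1) = n → fs.length = k →
    ∃ x : S ⊗[𝕜] L, ∀ e : L, pairT A S ι x ((1 : S) ⊗ₜ[𝕜] e) = ω k (es ++ [e]) fs

/-- `ωt` is a choice of `φ`-preimages `ω̃` for the representable cochain `ω`. -/
def IsPre (n : ℕ) (ω : ℕ → List L → List A.leftCenter → S)
    (ωt : ℕ → List L → List A.leftCenter → S ⊗[𝕜] L) : Prop :=
  ∀ (k : ℕ) (es : List L) (fs : List A.leftCenter),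
    2*k + (es.length + 1) = n → fs.length = k →
    ∀ e : L, pairT A S ι (ωt k es fs) ((1 : S) ⊗ₜ[𝕜] e) = ω k (es ++ [e]) fs

/-- `ωc k es x fs` is the extension `ω̌` of `ω (k+1) es (·::fs)` from `Z` to all of
`S = S^•(Z)` in its first `Z`-slot, by the Leibniz rule. -/
structure IsExt (n : ℕ) (ω : ℕ → List L → List A.leftCenter → S)
    (ωc : ℕ → List L → S → List A.leftCenter → S) : Prop where
  on_gen : ∀ (k : ℕ) (es : List L) (fs : List A.leftCenter) (f : A.leftCenter),
    2*(k+1) + es.length = n → fs.length = k →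
    ωc k es (ι f) fs = ω (k+1) es (f :: fs)
  map_add : ∀ (k : ℕ) (es : List L) (fs : List A.leftCenter) (x y : S),
    2*(k+1) + es.length = n → fs.length = k →
    ωc k es (x + y) fs = ωc k es x fs + ωc k es y fs
  map_smul : ∀ (k : ℕ) (es : List L) (fs : List A.leftCenter) (c : 𝕜) (x : S),
    2*(k+1) + es.length = n → fs.length = k →
    ωc k es (c • x) fs = c • ωc k es x fs
  mul_rule : ∀ (k : ℕ) (es : List L) (fs : List A.leftCenter) (x y : S),
    2*(k+1) + es.length = n → fs.length = k →
    ωc k es (x * y) fs = x * ωc k es y fs + y * ωc k es x fs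

/-- The operation `ω ◇ η` built from the Leibniz-rule extension `ωc` of `ω`. -/
def cdiam (n m : ℕ) (ωc : ℕ → List L → S → List A.leftCenter → S)
    (η : ℕ → List L → List A.leftCenter → S) : ℕ → List L → List A.leftCenter → S :=
  fun k es fs => ∑ i ∈ Finset.range (k+1),
    if 2*(i+1) ≤ n ∧ 2*(k-i) ≤ m then
      shSum (n - 2*i - 2) es fun es₁ es₂ =>
        shSumU (k-i) fs fun fs₁ fs₂ => ωc i es₁ (η (k-i) es₂ fs₁) fs₂
    else 0

/-- The operation `ω • η` built from chosen `φ`-preimages `ωt`, `ηt`. -/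
noncomputable def cbull (n m : ℕ)
    (ωt ηt : ℕ → List L → List A.leftCenter → S ⊗[𝕜] L) :
    ℕ → List L → List A.leftCenter → S :=
  fun k es fs => (-1 : ℤ)^(m-1) • ∑ i ∈ Finset.range (k+1),
    if 2*i + 1 ≤ n ∧ 2*(k-i) + 1 ≤ m then
      shSum (n - 2*i - 1) es fun es₁ es₂ =>
        shSumU i fs fun fs₁ fs₂ => pairT A S ι (ωt i es₁ fs₁) (ηt (k-i) es₂ fs₂)
    else 0

/-- The bracket `{ω, η} = ω•η + ω◇η − (−1)^{nm} η◇ω` of representable cochains. -/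
noncomputable def cpbr (n m : ℕ)
    (ω η : ℕ → List L → List A.leftCenter → S)
    (ωt ηt : ℕ → List L → List A.leftCenter → S ⊗[𝕜] L)
    (ωc ηc : ℕ → List L → S → List A.leftCenter → S) :
    ℕ → List L → List A.leftCenter → S :=
  fun k es fs => cbull A S ι n m ωt ηt k es fs + cdiam A S n m ωc η k es fs
    - (-1 : ℤ)^(n*m) • cdiam A S m n ηc ω k es fs

/-- The canonical 3-cochain `Θ`. -/
def ThetaC : ℕ → List L → List A.leftCenter → S :=
  fun k es fs => match k, es, fs with
    | 0, [e₁, e₂, e₃], [] => ι (A.spZ (A.br e₁ e₂) e₃)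
    | 1, [e], [f] => - ι (A.spZ e (f : L))
    | _, _, _ => 0

/-- The 2-cochain `ζ` with `ζ₀ = (·,·)` and `ζ₁(f) = −2f`. -/
def zetaC : ℕ → List L → List A.leftCenter → S :=
  fun k es fs => match k, es, fs with
    | 0, [e₁, e₂], [] => ι (A.spZ e₁ e₂)
    | 1, [], [f] => (-2 : 𝕜) • ι f
    | _, _, _ => 0

/-- The representable 1-cochain `e^♭ = (e, ·)`. -/
def eflat (e : L) : ℕ → List L → List A.leftCenter → S :=
  fun k es fs => match k, es, fs with
    | 0, [e'], [] => ι (A.spZ e e')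
    | _, _, _ => 0

end Cochains

section MyLemmas

variable {α β : Type*} {S : Type*}

lemma shSplits_length {l : List α} : ∀ t ∈ shSplits l, t.2.1.length + t.2.2.length = l.length := by
  induction l with
  | nil => intro t ht; simp [shSplits] at ht; simp [ht]
  | cons a l ih =>
    intro t ht
    simp only [shSplits, List.mem_append, List.mem_map] at ht
    rcases ht with ⟨s, hs, rfl⟩ | ⟨s, hs, rfl⟩ <;>
      · have := ih s hs; simp only [List.length_cons]; omega

/-- unfiltered signed sum over splits -/
def totSum [AddCommGroup S] (l : List α) (F : List α → List α → S) : S :=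
  ((shSplits l).map fun t => t.1 • F t.2.1 t.2.2).sum

/-- unfiltered unsigned sum over splits -/
def totSumU [AddCommMonoid S] (l : List α) (F : List α → List α → S) : S :=
  ((shSplits l).map fun t => F t.2.1 t.2.2).sum

lemma list_filter_map_sum [AddCommMonoid S] (l : List β) (P : β → Bool) (f : β → S) :
    ((l.filter P).map f).sum = (l.map fun x => if P x then f x else 0).sum := by
  induction l with
  | nil => simp
  | cons a l ih =>
    by_cases h : P a <;> simp [List.filter_cons, h, ih]

lemma shSum_eq_totSum [AddCommGroup S] (p : ℕ) (l : List α) (F : List α → List α → S) :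
    shSum p l F = totSum l fun u v => if u.length = p then F u v else 0 := by
  rw [shSum, totSum, list_filter_map_sum]
  congr 1
  apply List.map_congr_left
  intro t _
  by_cases h : t.2.1.length = p <;> simp [h]

lemma shSumU_eq_totSumU [AddCommMonoid S] (p : ℕ) (l : List α) (F : List α → List α → S) :
    shSumU p l F = totSumU l fun u v => if u.length = p then F u v else 0 := by
  rw [shSumU, totSumU, list_filter_map_sum]
  congr 1
  apply List.map_congr_left
  intro t _
  by_cases h : t.2.1.length = p <;> simp [h]

lemma totSum_congr [AddCommGroup S] {l : List α} {F G : List α → List α → S}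
    (h : ∀ u v, u.length + v.length = l.length → F u v = G u v) :
    totSum l F = totSum l G := by
  unfold totSum
  congr 1
  apply List.map_congr_left
  intro t ht
  rw [h _ _ (shSplits_length t ht)]

lemma totSumU_congr [AddCommMonoid S] {l : List α} {F G : List α → List α → S}
    (h : ∀ u v, u.length + v.length = l.length → F u v = G u v) :
    totSumU l F = totSumU l G := by
  unfold totSumU
  congr 1
  apply List.map_congr_left
  intro t ht
  rw [h _ _ (shSplits_length t ht)]

lemma totSum_zero [AddCommGroup S] (l : List α) :
    totSum l (fun _ _ => (0 : S)) = 0 := by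
  simp [totSum]

lemma totSum_add [AddCommGroup S] (l : List α) (F G : List α → List α → S) :
    totSum l (fun u v => F u v + G u v) = totSum l F + totSum l G := by
  unfold totSum
  rw [← List.sum_map_add]
  congr 1
  apply List.map_congr_left
  intro t _
  rw [smul_add]

lemma totSum_smul [AddCommGroup S] (c : ℤ) (l : List α) (F : List α → List α → S) :
    totSum l (fun u v => c • F u v) = c • totSum l F := by
  unfold totSum
  rw [List.smul_sum, List.map_map]
  congr 1
  apply List.map_congr_left
  intro t _
  simp [smul_comm c t.1]

lemma totSum_cons [AddCommGroup S] (a : α) (l : List α) (F : List α → List α → S) :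
    totSum (a :: l) F
      = totSum l (fun u v => F (a :: u) v)
        + totSum l (fun u v => ((-1 : ℤ)) ^ u.length • F u (a :: v)) := by
  unfold totSum
  rw [shSplits, List.map_append, List.sum_append, List.map_map, List.map_map]
  congr 1
  apply congrArg List.sum
  apply List.map_congr_left; intro t _
  show ((-1 : ℤ) ^ t.2.1.length * t.1) • F t.2.1 (a :: t.2.2)
      = t.1 • ((-1 : ℤ)) ^ t.2.1.length • F t.2.1 (a :: t.2.2)
  rw [mul_comm, mul_smul]

lemma totSumU_cons [AddCommMonoid S] (a : α) (l : List α) (F : List α → List α → S) :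
    totSumU (a :: l) F
      = totSumU l (fun u v => F (a :: u) v) + totSumU l (fun u v => F u (a :: v)) := by
  unfold totSumU
  rw [shSplits, List.map_append, List.sum_append, List.map_map, List.map_map]
  rfl

lemma totSum_coassoc [AddCommGroup S] (l : List α) (F : List α → List α → List α → S) :
    totSum l (fun u v => totSum u (fun x y => F x y v))
      = totSum l (fun x w => totSum w (fun y v => F x y v)) := by
  induction l generalizing F with
  | nil => rfl
  | cons a l ih =>
    rw [totSum_cons, totSum_cons]
    have e1 : totSum l (fun u v => totSum (a :: u) fun x y => F x y v)
        = totSum l (fun u v => totSum u (fun x y => F (a :: x) y v))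
          + totSum l (fun u v => totSum u (fun x y => ((-1 : ℤ)) ^ x.length • F x (a :: y) v)) := by
      rw [← totSum_add]
      apply totSum_congr
      intro u v _
      rw [totSum_cons]
    have e2 : totSum l (fun u v => ((-1 : ℤ)) ^ u.length • totSum u fun x y => F x y (a :: v))
        = totSum l (fun u v => totSum u (fun x y => ((-1 : ℤ)) ^ (x.length + y.length) • F x y (a :: v))) := by
      apply totSum_congr
      intro u v _
      rw [← totSum_smul]
      apply totSum_congr
      intro x y hxy
      rw [hxy]
    have e3 : totSum l (fun x w => ((-1 : ℤ)) ^ x.length • totSum (a :: w) fun y v => F x y v)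
        = totSum l (fun x w => totSum w (fun y v => ((-1 : ℤ)) ^ x.length • F x (a :: y) v))
          + totSum l (fun x w => totSum w (fun y v => ((-1 : ℤ)) ^ (x.length + y.length) • F x y (a :: v))) := by
      rw [← totSum_add]
      apply totSum_congr
      intro x w _
      rw [totSum_cons, smul_add, ← totSum_smul, ← totSum_smul]
      congr 1
      apply totSum_congr; intro y v _
      rw [smul_smul, ← pow_add]
    rw [e1, e2, e3, ih (fun x y v => F (a :: x) y v),
      ih (fun x y v => ((-1 : ℤ)) ^ x.length • F x (a :: y) v),
      ih (fun x y v => ((-1 : ℤ)) ^ (x.length + y.length) • F x y (a :: v))]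
    abel

lemma totSumU_add [AddCommMonoid S] (l : List α) (F G : List α → List α → S) :
    totSumU l (fun u v => F u v + G u v) = totSumU l F + totSumU l G := by
  unfold totSumU
  rw [← List.sum_map_add]

lemma totSumU_coassoc [AddCommMonoid S] (l : List α) (F : List α → List α → List α → S) :
    totSumU l (fun u v => totSumU u (fun x y => F x y v))
      = totSumU l (fun x w => totSumU w (fun y v => F x y v)) := by
  induction l generalizing F with
  | nil => rfl
  | cons a l ih =>
    rw [totSumU_cons, totSumU_cons]
    have e1 : totSumU l (fun u v => totSumU (a :: u) fun x y => F x y v)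
        = totSumU l (fun u v => totSumU u (fun x y => F (a :: x) y v))
          + totSumU l (fun u v => totSumU u (fun x y => F x (a :: y) v)) := by
      rw [← totSumU_add]
      apply totSumU_congr
      intro u v _
      rw [totSumU_cons]
    have e3 : totSumU l (fun x w => totSumU (a :: w) fun y v => F x y v)
        = totSumU l (fun x w => totSumU w (fun y v => F x (a :: y) v))
          + totSumU l (fun x w => totSumU w (fun y v => F x y (a :: v))) := by
      rw [← totSumU_add]
      apply totSumU_congr
      intro x w _
      rw [totSumU_cons]
    rw [e1, e3, ih (fun x y v => F (a :: x) y v), ih (fun x y v => F x (a :: y) v),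
      ih (fun x y v => F x y (a :: v))]
    abel


lemma wsum_finsum [AddCommGroup S] (Lt : List (ℤ × List α × List α)) {γ : Type*} (s : Finset γ)
    (F : γ → List α → List α → S) :
    (Lt.map fun t => t.1 • ∑ i ∈ s, F i t.2.1 t.2.2).sum
      = ∑ i ∈ s, (Lt.map fun t => t.1 • F i t.2.1 t.2.2).sum := by
  induction Lt with
  | nil => simp
  | cons t Lt ih =>
    rw [List.map_cons, List.sum_cons, ih, Finset.smul_sum, ← Finset.sum_add_distrib]
    exact Finset.sum_congr rfl fun i _ => by rw [List.map_cons, List.sum_cons]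

lemma usum_finsum [AddCommMonoid S] (Lt : List (ℤ × List α × List α)) {γ : Type*} (s : Finset γ)
    (F : γ → List α → List α → S) :
    (Lt.map fun t => ∑ i ∈ s, F i t.2.1 t.2.2).sum
      = ∑ i ∈ s, (Lt.map fun t => F i t.2.1 t.2.2).sum := by
  induction Lt with
  | nil => simp
  | cons t Lt ih => simp [Finset.sum_add_distrib, ih]

lemma shSum_finsum [AddCommGroup S] (p : ℕ) (l : List α) {γ : Type*} (s : Finset γ)
    (F : γ → List α → List α → S) :
    shSum p l (fun u v => ∑ i ∈ s, F i u v) = ∑ i ∈ s, shSum p l (F i) :=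
  wsum_finsum _ s F

lemma shSumU_finsum [AddCommMonoid S] (p : ℕ) (l : List α) {γ : Type*} (s : Finset γ)
    (F : γ → List α → List α → S) :
    shSumU p l (fun u v => ∑ i ∈ s, F i u v) = ∑ i ∈ s, shSumU p l (F i) :=
  usum_finsum _ s F

lemma shSum_zero [AddCommGroup S] (p : ℕ) (l : List α) :
    shSum p l (fun _ _ => (0 : S)) = 0 := by
  simp [shSum]

lemma shSumU_zero [AddCommMonoid S] (p : ℕ) (l : List α) :
    shSumU p l (fun _ _ => (0 : S)) = 0 := by
  simp [shSumU]

lemma shSum_ite [AddCommGroup S] (p : ℕ) (l : List α) (c : Prop) [Decidable c]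
    (F : List α → List α → S) :
    shSum p l (fun u v => if c then F u v else 0) = if c then shSum p l F else 0 := by
  split_ifs with h
  · rfl
  · exact shSum_zero p l

lemma shSumU_ite [AddCommMonoid S] (p : ℕ) (l : List α) (c : Prop) [Decidable c]
    (F : List α → List α → S) :
    shSumU p l (fun u v => if c then F u v else 0) = if c then shSumU p l F else 0 := by
  split_ifs with h
  · rfl
  · exact shSumU_zero p l

lemma shSum_congr' [AddCommGroup S] {p : ℕ} {l : List α} {F G : List α → List α → S}
    (h : ∀ u v, F u v = G u v) : shSum p l F = shSum p l G := by
  have : F = G := funext fun u => funext (h u)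
  rw [this]

lemma shSumU_congr' [AddCommMonoid S] {p : ℕ} {l : List α} {F G : List α → List α → S}
    (h : ∀ u v, F u v = G u v) : shSumU p l F = shSumU p l G := by
  have : F = G := funext fun u => funext (h u)
  rw [this]

section RingS
variable {R : Type*} [CommRing R]

lemma shSum_mul_right (p : ℕ) (l : List α) (F : List α → List α → R) (c : R) :
    shSum p l F * c = shSum p l (fun u v => F u v * c) := by
  unfold shSum
  rw [← List.sum_map_mul_right]
  congr 1
  apply List.map_congr_left; intro t _
  rw [smul_mul_assoc]

lemma shSumU_mul_right (p : ℕ) (l : List α) (F : List α → List α → R) (c : R) :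
    shSumU p l F * c = shSumU p l (fun u v => F u v * c) := by
  unfold shSumU
  rw [← List.sum_map_mul_right]

lemma shSum_mul_left (p : ℕ) (l : List α) (F : List α → List α → R) (c : R) :
    c * shSum p l F = shSum p l (fun u v => c * F u v) := by
  unfold shSum
  rw [← List.sum_map_mul_left]
  congr 1
  apply List.map_congr_left; intro t _
  rw [mul_smul_comm]

lemma shSumU_mul_left (p : ℕ) (l : List α) (F : List α → List α → R) (c : R) :
    c * shSumU p l F = shSumU p l (fun u v => c * F u v) := by
  unfold shSumU
  rw [← List.sum_map_mul_left]

end RingS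

lemma list_sum_comm [AddCommMonoid S] {γ δ : Type*} (l1 : List γ) (l2 : List δ)
    (f : γ → δ → S) :
    (l1.map fun a => (l2.map fun b => f a b).sum).sum
      = (l2.map fun b => (l1.map fun a => f a b).sum).sum := by
  induction l1 with
  | nil => simp
  | cons a l1 ih => simp [List.sum_map_add, ih]

lemma shSumU_shSum_comm [AddCommGroup S] (b a : ℕ) (r : List β) (l : List α)
    (F : List α → List α → List β → List β → S) :
    shSumU b r (fun p q => shSum a l (fun u v => F u v p q))
      = shSum a l (fun u v => shSumU b r (fun p q => F u v p q)) := by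
  unfold shSum shSumU
  rw [list_sum_comm]
  congr 1
  apply List.map_congr_left; intro t _
  rw [List.smul_sum, List.map_map]
  rfl

lemma totSum_eq_zero [AddCommGroup S] {l : List α} {F : List α → List α → S}
    (h : ∀ u v, u.length + v.length = l.length → F u v = 0) :
    totSum l F = 0 := by
  rw [totSum_congr (G := fun _ _ => 0) h]
  exact totSum_zero l

lemma totSumU_eq_zero [AddCommMonoid S] {l : List α} {F : List α → List α → S}
    (h : ∀ u v, u.length + v.length = l.length → F u v = 0) :
    totSumU l F = 0 := by
  rw [totSumU_congr (G := fun _ _ => 0) h]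
  simp [totSumU]

lemma shSum_coassoc [AddCommGroup S] (p q : ℕ) (l : List α)
    (F : List α → List α → List α → S) :
    shSum (p+q) l (fun u v => shSum p u (fun x y => F x y v))
      = shSum p l (fun x w => shSum q w (fun y v => F x y v)) := by
  rw [shSum_eq_totSum, shSum_eq_totSum]
  have hL : totSum l (fun u v => if u.length = p+q then shSum p u (fun x y => F x y v) else 0)
      = totSum l (fun u v => totSum u
          (fun x y => if x.length = p ∧ y.length = q then F x y v else 0)) := by
    apply totSum_congr; intro u v _
    by_cases h : u.length = p + q
    · rw [if_pos h, shSum_eq_totSum]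
      apply totSum_congr; intro x y hxy
      by_cases hx : x.length = p
      · rw [if_pos hx, if_pos ⟨hx, by omega⟩]
      · rw [if_neg hx, if_neg (by tauto)]
    · rw [if_neg h]
      exact (totSum_eq_zero fun x y hxy => if_neg (by omega)).symm
  have hR : totSum l (fun x w => if x.length = p then shSum q w (fun y v => F x y v) else 0)
      = totSum l (fun x w => totSum w
          (fun y v => if x.length = p ∧ y.length = q then F x y v else 0)) := by
    apply totSum_congr; intro x w _
    by_cases h : x.length = p
    · rw [if_pos h, shSum_eq_totSum]
      apply totSum_congr; intro y v _
      by_cases hy : y.length = q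
      · rw [if_pos hy, if_pos ⟨h, hy⟩]
      · rw [if_neg hy, if_neg (by tauto)]
    · rw [if_neg h]
      exact (totSum_eq_zero fun y v _ => if_neg (by tauto)).symm
  rw [hL, hR, totSum_coassoc]

lemma shSumU_coassoc [AddCommMonoid S] (p q : ℕ) (l : List α)
    (F : List α → List α → List α → S) :
    shSumU (p+q) l (fun u v => shSumU p u (fun x y => F x y v))
      = shSumU p l (fun x w => shSumU q w (fun y v => F x y v)) := by
  rw [shSumU_eq_totSumU, shSumU_eq_totSumU]
  have hL : totSumU l (fun u v => if u.length = p+q then shSumU p u (fun x y => F x y v) else 0)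
      = totSumU l (fun u v => totSumU u
          (fun x y => if x.length = p ∧ y.length = q then F x y v else 0)) := by
    apply totSumU_congr; intro u v _
    by_cases h : u.length = p + q
    · rw [if_pos h, shSumU_eq_totSumU]
      apply totSumU_congr; intro x y hxy
      by_cases hx : x.length = p
      · rw [if_pos hx, if_pos ⟨hx, by omega⟩]
      · rw [if_neg hx, if_neg (by tauto)]
    · rw [if_neg h]
      exact (totSumU_eq_zero fun x y hxy => if_neg (by omega)).symm
  have hR : totSumU l (fun x w => if x.length = p then shSumU q w (fun y v => F x y v) else 0)
      = totSumU l (fun x w => totSumU w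
          (fun y v => if x.length = p ∧ y.length = q then F x y v else 0)) := by
    apply totSumU_congr; intro x w _
    by_cases h : x.length = p
    · rw [if_pos h, shSumU_eq_totSumU]
      apply totSumU_congr; intro y v _
      by_cases hy : y.length = q
      · rw [if_pos hy, if_pos ⟨h, hy⟩]
      · rw [if_neg hy, if_neg (by tauto)]
    · rw [if_neg h]
      exact (totSumU_eq_zero fun y v _ => if_neg (by tauto)).symm
  rw [hL, hR, totSumU_coassoc]

lemma sum_tri {M : Type*} [AddCommMonoid M] (k : ℕ) (f : ℕ → ℕ → M) :
    ∑ i ∈ Finset.range (k+1), ∑ a ∈ Finset.range (i+1), f i a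
      = ∑ a ∈ Finset.range (k+1), ∑ b ∈ Finset.range (k+1-a), f (a+b) a := by
  rw [Finset.sum_sigma', Finset.sum_sigma']
  refine Finset.sum_nbij' (fun p => ⟨p.2, p.1 - p.2⟩) (fun p => ⟨p.1 + p.2, p.1⟩)
    ?_ ?_ ?_ ?_ ?_
  · rintro ⟨i, a⟩ h
    simp only [Finset.mem_sigma, Finset.mem_range] at *
    omega
  · rintro ⟨a, b⟩ h
    simp only [Finset.mem_sigma, Finset.mem_range] at *
    omega
  · rintro ⟨i, a⟩ h
    simp only [Finset.mem_sigma, Finset.mem_range] at h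
    simp only [Sigma.mk.inj_iff]
    exact ⟨by omega, heq_of_eq rfl⟩
  · rintro ⟨a, b⟩ h
    simp only [Sigma.mk.inj_iff]
    exact ⟨trivial, heq_of_eq (by omega)⟩
  · rintro ⟨i, a⟩ h
    simp only [Finset.mem_sigma, Finset.mem_range] at h
    have : a + (i - a) = i := by omega
    simp [this]

end MyLemmas

section GenMul

variable {α β : Type*} {R : Type*} [CommRing R]

/-- generic version of `cmul` -/
def genMul (n m : ℕ) (ω η : ℕ → List α → List β → R) :
    ℕ → List α → List β → R :=
  fun k es fs => ∑ i ∈ Finset.range (k+1),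
    if 2*i ≤ n ∧ 2*(k-i) ≤ m then
      shSum (n - 2*i) es fun es₁ es₂ =>
        shSumU i fs fun fs₁ fs₂ => ω i es₁ fs₁ * η (k-i) es₂ fs₂
    else 0

/-- the common triple form -/
def tripForm (n m l : ℕ) (ω η lam : ℕ → List α → List β → R)
    (k : ℕ) (es : List α) (fs : List β) : R :=
  ∑ a ∈ Finset.range (k+1), ∑ b ∈ Finset.range (k+1-a),
    if 2*a ≤ n ∧ 2*b ≤ m ∧ 2*(k-a-b) ≤ l then
      shSum (n - 2*a) es fun es₁ es₂ =>
        shSum (m - 2*b) es₂ fun es₃ es₄ =>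
          shSumU a fs fun fs₁ fs₂ =>
            shSumU b fs₂ fun fs₃ fs₄ =>
              ω a es₁ fs₁ * (η b es₃ fs₃ * lam (k-a-b) es₄ fs₄)
    else 0

lemma genMul_right_assoc (n m l : ℕ) (ω η lam : ℕ → List α → List β → R)
    (k : ℕ) (es : List α) (fs : List β) :
    genMul n (m+l) ω (genMul m l η lam) k es fs = tripForm n m l ω η lam k es fs := by
  unfold genMul tripForm
  apply Finset.sum_congr rfl
  intro a ha
  rw [Finset.mem_range] at ha
  simp only [Finset.mul_sum, mul_ite, mul_zero]
  simp only [shSum_mul_left, shSumU_mul_left]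
  simp only [shSumU_finsum, shSumU_ite, shSum_finsum, shSum_ite]
  simp only [shSumU_shSum_comm]
  by_cases h1 : 2*a ≤ n ∧ 2*(k-a) ≤ m+l
  · rw [if_pos h1]
    rw [show k+1-a = (k-a)+1 by omega]
    apply Finset.sum_congr rfl
    intro b hb
    rw [Finset.mem_range] at hb
    exact if_congr (by omega) rfl rfl
  · rw [if_neg h1]
    symm
    apply Finset.sum_eq_zero
    intro b hb
    rw [Finset.mem_range] at hb
    exact if_neg (by omega)


lemma genMul_left_assoc (n m l : ℕ) (ω η lam : ℕ → List α → List β → R)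
    (k : ℕ) (es : List α) (fs : List β) :
    genMul (n+m) l (genMul n m ω η) lam k es fs = tripForm n m l ω η lam k es fs := by
  unfold genMul tripForm
  have key : ∀ i ∈ Finset.range (k+1),
      (if 2*i ≤ n+m ∧ 2*(k-i) ≤ l then
        shSum (n+m - 2*i) es fun es₁ es₂ =>
          shSumU i fs fun fs₁ fs₂ =>
            (∑ a ∈ Finset.range (i+1),
              if 2*a ≤ n ∧ 2*(i-a) ≤ m then
                shSum (n - 2*a) es₁ fun x y =>
                  shSumU a fs₁ fun p q => ω a x p * η (i-a) y q
              else 0) * lam (k-i) es₂ fs₂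
      else 0)
      = ∑ a ∈ Finset.range (i+1),
          if (2*i ≤ n+m ∧ 2*(k-i) ≤ l) ∧ 2*a ≤ n ∧ 2*(i-a) ≤ m then
            shSum (n - 2*a) es fun x w =>
              shSum (m - 2*(i-a)) w fun y v =>
                shSumU a fs fun p r =>
                  shSumU (i-a) r fun q h =>
                    ω a x p * η (i-a) y q * lam (k-i) v h
          else 0 := by
    intro i hi
    rw [Finset.mem_range] at hi
    simp only [Finset.sum_mul, ite_mul, zero_mul]
    simp only [shSum_mul_right, shSumU_mul_right]
    simp only [shSumU_finsum, shSumU_ite, shSum_finsum, shSum_ite]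
    simp only [shSumU_shSum_comm]
    by_cases h1 : 2*i ≤ n+m ∧ 2*(k-i) ≤ l
    · rw [if_pos h1]
      apply Finset.sum_congr rfl
      intro a haa
      rw [Finset.mem_range] at haa
      by_cases h2 : 2*a ≤ n ∧ 2*(i-a) ≤ m
      · rw [if_pos h2, if_pos ⟨h1, h2⟩]
        obtain ⟨b, rfl⟩ : ∃ b, i = a + b := ⟨i - a, by omega⟩
        simp only [Nat.add_sub_cancel_left]
        rw [show n+m-2*(a+b) = (n-2*a) + (m-2*b) by omega]
        rw [shSum_coassoc]
        apply shSum_congr'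
        intro x w
        apply shSum_congr'
        intro y v
        exact shSumU_coassoc a b fs _
      · rw [if_neg h2, if_neg (by tauto)]
    · rw [if_neg h1]
      symm
      apply Finset.sum_eq_zero
      intro a haa
      exact if_neg (by tauto)
  rw [Finset.sum_congr rfl key, sum_tri]
  apply Finset.sum_congr rfl
  intro a ha
  rw [Finset.mem_range] at ha
  apply Finset.sum_congr rfl
  intro b hb
  rw [Finset.mem_range] at hb
  simp only [Nat.add_sub_cancel_left]
  rw [show k-(a+b) = k-a-b by omega]
  simp only [mul_assoc]
  exact if_congr (by omega) rfl rfl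

end GenMul

section Theorems

variable {𝕜 : Type u} [Field 𝕜] {L : Type v} [AddCommGroup L] [Module 𝕜 L]

theorem cmul_assoc (A : LeibnizAlg 𝕜 L) (S : Type w) [CommRing S] [Algebra 𝕜 S]
    (ι : A.leftCenter →ₗ[𝕜] S) (hS : IsSymAlg S ι)
    (n m l : ℕ) (ω η lam : ℕ → List L → List A.leftCenter → S)
    (hω : IsCochain A S n ω) (hη : IsCochain A S m η) (hlam : IsCochain A S l lam) :
    ∀ (k : ℕ) (es : List L) (fs : List A.leftCenter),
      2*k + es.length = n + m + l → fs.length = k →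
      cmul A S (n+m) l (cmul A S n m ω η) lam k es fs
          = (∑ a ∈ Finset.range (k+1), ∑ b ∈ Finset.range (k+1-a),
              if 2*a ≤ n ∧ 2*b ≤ m ∧ 2*(k-a-b) ≤ l then
                shSum (n - 2*a) es fun es₁ es₂ =>
                  shSum (m - 2*b) es₂ fun es₃ es₄ =>
                    shSumU a fs fun fs₁ fs₂ =>
                      shSumU b fs₂ fun fs₃ fs₄ =>
                        ω a es₁ fs₁ * (η b es₃ fs₃ * lam (k-a-b) es₄ fs₄)
              else 0)
        ∧ cmul A S n (m+l) ω (cmul A S m l η lam) k es fs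
          = (∑ a ∈ Finset.range (k+1), ∑ b ∈ Finset.range (k+1-a),
              if 2*a ≤ n ∧ 2*b ≤ m ∧ 2*(k-a-b) ≤ l then
                shSum (n - 2*a) es fun es₁ es₂ =>
                  shSum (m - 2*b) es₂ fun es₃ es₄ =>
                    shSumU a fs fun fs₁ fs₂ =>
                      shSumU b fs₂ fun fs₃ fs₄ =>
                        ω a es₁ fs₁ * (η b es₃ fs₃ * lam (k-a-b) es₄ fs₄)
              else 0) := by
  intro k es fs _ _
  exact ⟨genMul_left_assoc n m l ω η lam k es fs,
    genMul_right_assoc n m l ω η lam k es fs⟩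

end Theorems
end

section
/- Let L be a Leibniz algebra over a field 𝕜 with left center Z. The operator d₀ is a graded derivation of degree 1 of the multiplication on C(L): for ω ∈ C^n(L) and η ∈ C^m(L), d₀(ω·η) = (d₀ω)·η + (−1)^n ω·(d₀η). -/
open scoped TensorProduct

universe u v w

/-!
View `d₀` as an operator on functions `u` of the `L`-arguments alone (the `Z`-arguments are
spectators). Splitting off the first argument gives the Cartan-type recursion
`d₀u(e, t) = (L_e u)(t) - d₀(ι_e u)(t)`, where `ι_e u = u(e, ·)` and
`L_e = ρ(e) - Σ_b (e ∘ ·) in slot b` is the action of `e` on cochains.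
`L_e` is a derivation of the shuffle product, because `ρ(e)` is a derivation of `S^•(Z)` and
`e ∘ ·` acts one slot at a time, while `ι_e` is a graded derivation of it by the recursion of
shuffles. Induction on the number of arguments then gives the Leibniz rule for `d₀` on every
summand of `ω · η`; the shuffle sums over the `Z`-arguments commute with all of this.
-/

section ShuffleSums

variable {α M : Type*} [AddCommGroup M]

theorem shSum_nil (p : ℕ) (F : List α → List α → M) :
    shSum p [] F = if p = 0 then F [] [] else 0 := by
  rcases p with _ | p <;> simp [shSum, shSplits]

theorem shSum_cons (p : ℕ) (c : α) (t : List α) (F : List α → List α → M) :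
    shSum p (c :: t) F = (((shSplits t).filter (·.2.1.length + 1 == p)).map
        fun s => s.1 • F (c :: s.2.1) s.2.2).sum
      + (-1 : ℤ) ^ p • shSum p t fun l r => F l (c :: r) := by
  simp only [shSum, shSplits, List.filter_append, List.filter_map, List.map_append,
    List.sum_append, List.map_map, List.smul_sum, Function.comp_def, List.length_cons]
  congr 2
  refine List.map_congr_left fun s hs => ?_
  rw [(beq_iff_eq.mp (List.mem_filter.mp hs).2 : s.2.1.length = p), mul_smul]

theorem shSum_cons_zero (c : α) (t : List α) (F : List α → List α → M) :
    shSum 0 (c :: t) F = shSum 0 t fun l r => F l (c :: r) := by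
  simp [shSum_cons]

theorem shSum_cons_succ (p : ℕ) (c : α) (t : List α) (F : List α → List α → M) :
    shSum (p + 1) (c :: t) F = shSum p t (fun l r => F (c :: l) r)
      + (-1 : ℤ) ^ (p + 1) • shSum (p + 1) t fun l r => F l (c :: r) := by
  have hfilter : (fun s : ℤ × List α × List α => s.2.1.length + 1 == p + 1)
      = fun s => s.2.1.length == p := by
    funext s; simp
  rw [shSum_cons, hfilter, shSum, shSum]

theorem shSum_zero_s4 (t : List α) (F : List α → List α → M) : shSum 0 t F = F [] t := by
  induction t generalizing F with
  | nil => simp [shSum_nil]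
  | cons c t ih => rw [shSum_cons_zero, ih]

theorem shSum_of_length_lt {p : ℕ} {t : List α} (h : t.length < p) (F : List α → List α → M) :
    shSum p t F = 0 := by
  induction t generalizing p F with
  | nil => simp [shSum_nil, Nat.pos_iff_ne_zero.mp h]
  | cons c t ih =>
    obtain ⟨q, rfl⟩ := Nat.exists_eq_add_one_of_ne_zero (Nat.ne_zero_of_lt h)
    simp only [List.length_cons] at h
    rw [shSum_cons_succ, ih (by omega), ih (by omega), smul_zero, add_zero]

theorem shSum_length (t : List α) (F : List α → List α → M) : shSum t.length t F = F t [] := by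
  induction t generalizing F with
  | nil => simp [shSum_nil]
  | cons c t ih =>
    rw [List.length_cons, shSum_cons_succ, ih, shSum_of_length_lt (by omega), smul_zero, add_zero]

theorem shSum_add (p : ℕ) (t : List α) (F G : List α → List α → M) :
    shSum p t (fun l r => F l r + G l r) = shSum p t F + shSum p t G := by
  simp only [shSum, smul_add, List.sum_map_add]

theorem shSum_zsmul (c : ℤ) (p : ℕ) (t : List α) (F : List α → List α → M) :
    shSum p t (fun l r => c • F l r) = c • shSum p t F := by
  simp only [shSum, List.smul_sum, List.map_map]
  exact congrArg _ (List.map_congr_left fun s _ => smul_comm s.1 c _)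

theorem shSum_sub (p : ℕ) (t : List α) (F G : List α → List α → M) :
    shSum p t (fun l r => F l r - G l r) = shSum p t F - shSum p t G := by
  have h := shSum_add p t (fun l r => F l r - G l r) G
  simp only [sub_add_cancel] at h
  exact eq_sub_of_add_eq h.symm

theorem map_shSum {N F' : Type*} [AddCommGroup N] [FunLike F' M N] [AddMonoidHomClass F' M N]
    (f : F') (p : ℕ) (t : List α) (F : List α → List α → M) :
    f (shSum p t F) = shSum p t fun l r => f (F l r) := by
  simp [shSum, map_list_sum, Function.comp_def]

theorem shSumU_add (p : ℕ) (t : List α) (F G : List α → List α → M) :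
    shSumU p t (fun l r => F l r + G l r) = shSumU p t F + shSumU p t G := by
  simp only [shSumU, List.sum_map_add]

theorem shSumU_zsmul (c : ℤ) (p : ℕ) (t : List α) (F : List α → List α → M) :
    shSumU p t (fun l r => c • F l r) = c • shSumU p t F := by
  simp only [shSumU, List.smul_sum, List.map_map, Function.comp_def]

theorem shSum_shSumU_comm {β : Type*} (p q : ℕ) (t : List α) (s : List β)
    (F : List α → List α → List β → List β → M) :
    shSum p t (fun l r => shSumU q s (F l r))
      = shSumU q s fun l' r' => shSum p t fun l r => F l r l' r' := by
  simp only [shSum, shSumU, List.smul_sum, List.map_map, Function.comp_def]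
  simpa using Multiset.sum_map_sum_map
    (↑((shSplits t).filter fun x => x.2.1.length == p) : Multiset (ℤ × List α × List α))
    (↑((shSplits s).filter fun x => x.2.1.length == q) : Multiset (ℤ × List β × List β))
    (f := fun x y => x.1 • F x.2.1 x.2.2 y.2.1 y.2.2)

end ShuffleSums

section ShuffleProduct

variable {α R : Type*} [CommRing R]

def shMul (p : ℕ) (u v : List α → R) (t : List α) : R := shSum p t fun l r => u l * v r

theorem shMul_nil (p : ℕ) (u v : List α → R) :
    shMul p u v [] = if p = 0 then u [] * v [] else 0 :=
  shSum_nil p _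

theorem shMul_zero (u v : List α → R) (t : List α) : shMul 0 u v t = u [] * v t :=
  shSum_zero_s4 t _

theorem shMul_cons_succ (p : ℕ) (u v : List α → R) (c : α) (t : List α) :
    shMul (p + 1) u v (c :: t) = shMul p (fun l => u (c :: l)) v t
      + (-1 : ℤ) ^ (p + 1) • shMul (p + 1) u (fun r => v (c :: r)) t :=
  shSum_cons_succ p c t _

theorem shMul_add_left (p : ℕ) (u u' v : List α → R) (t : List α) :
    shMul p (fun l => u l + u' l) v t = shMul p u v t + shMul p u' v t := by
  simp only [shMul, add_mul, shSum_add]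

theorem shMul_add_right (p : ℕ) (u v v' : List α → R) (t : List α) :
    shMul p u (fun r => v r + v' r) t = shMul p u v t + shMul p u v' t := by
  simp only [shMul, mul_add, shSum_add]

theorem shMul_sub_left (p : ℕ) (u u' v : List α → R) (t : List α) :
    shMul p (fun l => u l - u' l) v t = shMul p u v t - shMul p u' v t := by
  simp only [shMul, sub_mul, shSum_sub]

theorem shMul_sub_right (p : ℕ) (u v v' : List α → R) (t : List α) :
    shMul p u (fun r => v r - v' r) t = shMul p u v t - shMul p u v' t := by
  simp only [shMul, mul_sub, shSum_sub]

end ShuffleProduct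

def cmulTerm {α β R : Type*} [CommRing R] (n m : ℕ) (ω η : ℕ → List α → List β → R)
    (k i : ℕ) (es : List α) (fs : List β) : R :=
  if 2 * i ≤ n ∧ 2 * (k - i) ≤ m then
    shSum (n - 2 * i) es fun es₁ es₂ => shSumU i fs fun fs₁ fs₂ => ω i es₁ fs₁ * η (k - i) es₂ fs₂
  else 0

theorem List.set_getElem?_getD_eq_modify {α : Type*} (l : List α) (i : ℕ) (f : α → α) (d : α) :
    l.set i (f (l[i]?.getD d)) = l.modify i f := by
  induction l generalizing i with
  | nil => simp
  | cons c l ih => cases i <;> simp_all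

section ModifySum

variable {α M : Type*} [AddCommGroup M]

def modifySum (w : α → α) (u : List α → M) (t : List α) : M :=
  ∑ b ∈ Finset.range t.length, u (t.modify b w)

theorem modifySum_nil (w : α → α) (u : List α → M) : modifySum w u [] = 0 := by
  simp [modifySum]

theorem modifySum_cons (w : α → α) (u : List α → M) (c : α) (t : List α) :
    modifySum w u (c :: t) = u (w c :: t) + modifySum w (fun l => u (c :: l)) t := by
  simp [modifySum, Finset.sum_range_succ', add_comm]

theorem modifySum_add (w : α → α) (u v : List α → M) (t : List α) :
    modifySum w (fun l => u l + v l) t = modifySum w u t + modifySum w v t :=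
  Finset.sum_add_distrib

theorem modifySum_zsmul (w : α → α) (c : ℤ) (u : List α → M) (t : List α) :
    modifySum w (fun l => c • u l) t = c • modifySum w u t :=
  (Finset.smul_sum ..).symm

theorem modifySum_shMul {R : Type*} [CommRing R] (w : α → α) (p : ℕ) (u v : List α → R)
    (t : List α) :
    modifySum w (shMul p u v) t = shMul p (modifySum w u) v t + shMul p u (modifySum w v) t := by
  induction t generalizing p u v with
  | nil => rcases p with _ | p <;> simp [modifySum_nil, shMul_nil]
  | cons c t ih =>
    rcases p with _ | q
    · simp [shMul_zero, modifySum, Finset.mul_sum]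
    simp only [modifySum_cons, shMul_cons_succ, modifySum_add, modifySum_zsmul, ih,
      shMul_add_left, shMul_add_right]
    module

end ModifySum

namespace LeibnizAlg

variable {𝕜 : Type u} [Field 𝕜] {L : Type v} [AddCommGroup L] [Module 𝕜 L] (A : LeibnizAlg 𝕜 L)
  {S : Type w} [CommRing S]

theorem cmul_eq_sum_cmulTerm (n m : ℕ) (ω η : ℕ → List L → List A.leftCenter → S) (k : ℕ)
    (es : List L) (fs : List A.leftCenter) :
    cmul A S n m ω η k es fs = ∑ i ∈ Finset.range (k + 1), cmulTerm n m ω η k i es fs :=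
  rfl

variable [Algebra 𝕜 S] (ρ : L → Derivation 𝕜 S S)

def d0 (u : List L → S) (es : List L) : S :=
  (∑ a ∈ Finset.range es.length, (-1 : ℤ) ^ a • ρ (es.getD a 0) (u (es.eraseIdx a)))
    + ∑ a ∈ Finset.range es.length, ∑ b ∈ Finset.Ico (a + 1) es.length,
        (-1 : ℤ) ^ (a + 1) • u ((es.eraseIdx a).set (b - 1) (A.br (es.getD a 0) (es.getD b 0)))

theorem cd0_eq_d0 (ω : ℕ → List L → List A.leftCenter → S) (k : ℕ) (es : List L)
    (fs : List A.leftCenter) : cd0 A S ρ ω k es fs = A.d0 ρ (fun l => ω k l fs) es :=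
  rfl

theorem d0_nil (u : List L → S) : A.d0 ρ u [] = 0 := by
  simp [d0]

theorem d0_add (u v : List L → S) (es : List L) :
    A.d0 ρ (fun l => u l + v l) es = A.d0 ρ u es + A.d0 ρ v es := by
  simp only [d0, map_add, smul_add, Finset.sum_add_distrib]
  abel

theorem d0_zsmul (c : ℤ) (u : List L → S) (es : List L) :
    A.d0 ρ (fun l => c • u l) es = c • A.d0 ρ u es := by
  simp only [d0, map_zsmul, smul_add, Finset.smul_sum, smul_comm c]

theorem d0_finset_sum {ι : Type*} (B : Finset ι) (G : ι → List L → S) (es : List L) :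
    A.d0 ρ (fun l => ∑ i ∈ B, G i l) es = ∑ i ∈ B, A.d0 ρ (G i) es := by
  classical
  induction B using Finset.induction with
  | empty => simp [d0]
  | insert i B hi ih => simp only [Finset.sum_insert hi, d0_add, ih]

theorem d0_shSumU {β : Type*} (q : ℕ) (fs : List β) (G : List L → List β → List β → S)
    (es : List L) :
    A.d0 ρ (fun l => shSumU q fs (G l)) es
      = shSumU q fs fun g h => A.d0 ρ (fun l => G l g h) es := by
  unfold shSumU
  generalize (shSplits fs).filter (fun s => s.2.1.length == q) = M
  induction M with
  | nil => simp [d0]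
  | cons s M ih => simp only [List.map_cons, List.sum_cons, d0_add, ih]

def lieAct (e : L) (u : List L → S) (t : List L) : S := ρ e (u t) - modifySum (A.br e) u t

theorem d0_cons (u : List L → S) (e : L) (t : List L) :
    A.d0 ρ u (e :: t) = A.lieAct ρ e u t - A.d0 ρ (fun l => u (e :: l)) t := by
  have hfirst : ∑ x ∈ Finset.Ico 0 t.length, (-1 : ℤ) ^ (0 + 1) • u (((e :: t).eraseIdx 0).set
      (x + 1 - 1) (A.br ((e :: t).getD 0 0) ((e :: t).getD (x + 1) 0)))
        = -modifySum (A.br e) u t := by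
    simp [modifySum, List.set_getElem?_getD_eq_modify]
  have hrest (k : ℕ) : ∑ x ∈ Finset.Ico (k + 1) t.length, (-1 : ℤ) ^ (k + 1 + 1) •
      u (((e :: t).eraseIdx (k + 1)).set (x + 1 - 1)
        (A.br ((e :: t).getD (k + 1) 0) ((e :: t).getD (x + 1) 0)))
        = -∑ x ∈ Finset.Ico (k + 1) t.length, (-1 : ℤ) ^ (k + 1) •
          u (e :: (t.eraseIdx k).set (x - 1) (A.br (t.getD k 0) (t.getD x 0))) := by
    rw [← Finset.sum_neg_distrib]
    refine Finset.sum_congr rfl fun x hx => ?_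
    obtain ⟨y, rfl⟩ : ∃ y, x = y + 1 := ⟨x - 1, by simp at hx; omega⟩
    simp [pow_succ]
  simp only [d0, lieAct, List.length_cons, Finset.sum_range_succ',
    ← Finset.sum_Ico_add' (c := 1), hfirst, hrest]
  simp [pow_succ, Finset.sum_neg_distrib]
  abel

theorem lieAct_shMul (e : L) (p : ℕ) (u v : List L → S) (t : List L) :
    A.lieAct ρ e (shMul p u v) t = shMul p (A.lieAct ρ e u) v t + shMul p u (A.lieAct ρ e v) t := by
  have hρ : ρ e (shMul p u v t)
      = shMul p (fun l => ρ e (u l)) v t + shMul p u (fun r => ρ e (v r)) t := by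
    simp only [shMul, map_shSum, ← shSum_add, Derivation.leibniz, smul_eq_mul, mul_comm, add_comm]
  unfold lieAct
  rw [shMul_sub_left, shMul_sub_right, hρ, modifySum_shMul]
  abel

theorem d0_shMul (p : ℕ) (u v : List L → S) (t : List L) :
    A.d0 ρ (shMul p u v) t
      = shMul (p + 1) (A.d0 ρ u) v t + (-1 : ℤ) ^ p • shMul p u (A.d0 ρ v) t := by
  induction t generalizing p u v with
  | nil => simp [d0_nil, shMul_nil]
  | cons c t ih =>
    rcases p with _ | q
    · have h0 : (fun l => shMul 0 u v (c :: l)) = shMul 0 u (fun r => v (c :: r)) :=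
        funext fun l => by simp only [shMul_zero]
      rw [d0_cons, lieAct_shMul, h0, ih, shMul_cons_succ 0]
      simp only [d0_cons, shMul_zero, d0_nil, shMul_sub_left, zero_mul, sub_zero, mul_sub]
      module
    · simp only [d0_cons, lieAct_shMul, shMul_cons_succ, d0_add, d0_zsmul, ih, shMul_sub_left,
        shMul_sub_right, smul_add, smul_sub, smul_smul, ← pow_add, ← two_mul, pow_mul, neg_one_sq,
        one_pow, one_smul]
      module

theorem d0_shSum_shSumU {β : Type*} (p q : ℕ) (fs : List β) (U V : List L → List β → S)
    (es : List L) :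
    A.d0 ρ (fun l => shSum p l fun a b => shSumU q fs fun g h => U a g * V b h) es
      = shSum (p + 1) es (fun a b => shSumU q fs fun g h => A.d0 ρ (U · g) a * V b h)
        + (-1 : ℤ) ^ p • shSum p es fun a b => shSumU q fs fun g h => U a g * A.d0 ρ (V · h) b := by
  have hleibniz (g h : List β) := A.d0_shMul ρ p (U · g) (V · h) es
  unfold shMul at hleibniz
  simp only [shSum_shSumU_comm, d0_shSumU, hleibniz, shSumU_add, shSumU_zsmul]

theorem d0_cmulTerm {n m k : ℕ} (ω η : ℕ → List L → List A.leftCenter → S) {es : List L}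
    (fs : List A.leftCenter) (hlen : 2 * k + es.length = n + m + 1) (i : ℕ) :
    A.d0 ρ (fun l => cmulTerm n m ω η k i l fs) es
      = cmulTerm (n + 1) m (cd0 A S ρ ω) η k i es fs
        + (-1 : ℤ) ^ n • cmulTerm n (m + 1) ω (cd0 A S ρ η) k i es fs := by
  by_cases hc : 2 * i ≤ n ∧ 2 * (k - i) ≤ m
  · have hdeg : n + 1 - 2 * i = n - 2 * i + 1 := by omega
    have hsign : (-1 : ℤ) ^ n = (-1) ^ (n - 2 * i) := by
      rw [← Nat.sub_add_cancel hc.1, pow_add, pow_mul, neg_one_sq, one_pow, mul_one,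
        Nat.sub_add_cancel hc.1]
    simp only [cmulTerm, if_pos hc, if_pos (show 2 * i ≤ n + 1 ∧ 2 * (k - i) ≤ m by omega),
      if_pos (show 2 * i ≤ n ∧ 2 * (k - i) ≤ m + 1 by omega), hdeg, hsign]
    exact A.d0_shSum_shSumU ρ _ _ fs _ _ es
  · -- Only `2 * i = n + 1` or `2 * (k - i) = m + 1` can survive, and there `d₀` sees no argument.
    have hleft : cmulTerm (n + 1) m (cd0 A S ρ ω) η k i es fs = 0 := by
      unfold cmulTerm
      split_ifs with h
      · rw [show n + 1 - 2 * i = 0 by omega, shSum_zero_s4]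
        simp [cd0, shSumU]
      · rfl
    have hright : cmulTerm n (m + 1) ω (cd0 A S ρ η) k i es fs = 0 := by
      unfold cmulTerm
      split_ifs with h
      · rw [show n - 2 * i = es.length by omega, shSum_length]
        simp [cd0, shSumU]
      · rfl
    rw [hleft, hright, smul_zero, add_zero]
    simp [cmulTerm, hc, d0]

end LeibnizAlg

section Theorems

variable {𝕜 : Type u} [Field 𝕜] {L : Type v} [AddCommGroup L] [Module 𝕜 L]

theorem cd0_derivation_general (A : LeibnizAlg 𝕜 L) (S : Type w) [CommRing S] [Algebra 𝕜 S]
    (ρ : L → Derivation 𝕜 S S)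
    (n m : ℕ) (ω η : ℕ → List L → List A.leftCenter → S) :
    ∀ (k : ℕ) (es : List L) (fs : List A.leftCenter),
      2*k + es.length = n + m + 1 → fs.length = k →
      cd0 A S ρ (cmul A S n m ω η) k es fs
        = cmul A S (n+1) m (cd0 A S ρ ω) η k es fs
          + (-1 : ℤ)^n • cmul A S n (m+1) ω (cd0 A S ρ η) k es fs := by
  intro k es fs hlen _
  simp only [A.cd0_eq_d0, A.cmul_eq_sum_cmulTerm, A.d0_finset_sum, A.d0_cmulTerm ρ ω η fs hlen,
    Finset.sum_add_distrib, Finset.smul_sum]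

theorem cd0_derivation (A : LeibnizAlg 𝕜 L) (S : Type w) [CommRing S] [Algebra 𝕜 S]
    (ι : A.leftCenter →ₗ[𝕜] S) (hS : IsSymAlg S ι)
    (ρ : L → Derivation 𝕜 S S)
    (hρ : ∀ (e : L) (f : A.leftCenter), ρ e (ι f) = ι (A.brZ e f))
    (n m : ℕ) (ω η : ℕ → List L → List A.leftCenter → S)
    (hω : IsCochain A S n ω) (hη : IsCochain A S m η) :
    ∀ (k : ℕ) (es : List L) (fs : List A.leftCenter),
      2*k + es.length = n + m + 1 → fs.length = k →
      cd0 A S ρ (cmul A S n m ω η) k es fs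
        = cmul A S (n+1) m (cd0 A S ρ ω) η k es fs
          + (-1 : ℤ)^n • cmul A S n (m+1) ω (cd0 A S ρ η) k es fs :=
  cd0_derivation_general A S ρ n m ω η

end Theorems
end
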